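/- Assume d ≥ 1 and 2 + 4/d < p + 1 < 2*. If f ∈ H¹(ℝᵈ) is nonzero and satisfies 𝒦(f) = 0, then f does not belong to the potential well PW; consequently PW = PW₊ ∪ PW₋ with PW₊ ∩ PW₋ = ∅. -/

import Mathlib

open MeasureTheory Filter Set
open scoped ENNReal Topology

noncomputable section

abbrev Euc (d : ℕ) := EuclideanSpace ℝ (Fin d)

def gradSq (d : ℕ) (f : Euc d → ℂ) : ℝ := ∫ x, ‖fderiv ℝ f x‖ ^ 2

def ppow (d : ℕ) (q : ℝ) (f : Euc d → ℂ) : ℝ := ∫ x, ‖f x‖ ^ q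

def l2norm (d : ℕ) (f : Euc d → ℂ) : ℝ := Real.sqrt (ppow d 2 f)

def InH1 (d : ℕ) (f : Euc d → ℂ) : Prop :=
  MemLp f 2 (volume : Measure (Euc d)) ∧ Differentiable ℝ f ∧
    Integrable (fun x => ‖fderiv ℝ f x‖ ^ 2) (volume : Measure (Euc d))

/-- `ℋ(f) = ‖∇f‖² − (2/(p+1))‖f‖_{p+1}^{p+1}`. -/
def Hfun (d : ℕ) (p : ℝ) (f : Euc d → ℂ) : ℝ :=
  gradSq d f - (2 / (p + 1)) * ppow d (p + 1) f

/-- `𝒦(f) = ‖∇f‖² − (d(p−1)/(2(p+1)))‖f‖_{p+1}^{p+1}`. -/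
def Kfun (d : ℕ) (p : ℝ) (f : Euc d → ℂ) : ℝ :=
  gradSq d f - ((d : ℝ) * (p - 1) / (2 * (p + 1))) * ppow d (p + 1) f

/-- Admissible (nonzero `H¹`) functions. -/
def Adm (d : ℕ) (p : ℝ) (f : Euc d → ℂ) : Prop :=
  InH1 d f ∧ MemLp f (ENNReal.ofReal (p + 1)) (volume : Measure (Euc d)) ∧
    ¬ (f =ᵐ[(volume : Measure (Euc d))] (0 : Euc d → ℂ))

def N2fun (d : ℕ) (p : ℝ) (f : Euc d → ℂ) : ℝ :=
  l2norm d f ^ (p + 1 - (d : ℝ) * (p - 1) / 2) *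
    Real.sqrt (gradSq d f) ^ ((d : ℝ) * (p - 1) / 2 - 2)

def N2val (d : ℕ) (p : ℝ) : ℝ :=
  sInf {r : ℝ | ∃ f : Euc d → ℂ, Adm d p f ∧ Kfun d p f ≤ 0 ∧ r = N2fun d p f}

/-- `ℬ(f) = ((d(p−1)−4)/(d(p−1))) (N₂/‖f‖_{L²}^{p+1−d(p−1)/2})^{4/(d(p−1)−4)}`. -/
def Bfun (d : ℕ) (p : ℝ) (f : Euc d → ℂ) : ℝ :=
  (((d : ℝ) * (p - 1) - 4) / ((d : ℝ) * (p - 1))) *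
    (N2val d p / l2norm d f ^ (p + 1 - (d : ℝ) * (p - 1) / 2)) ^ (4 / ((d : ℝ) * (p - 1) - 4))

/-- The potential well `PW = { f ∈ H¹\{0} : ℋ(f) < ℬ(f) }`. -/
def PWset (d : ℕ) (p : ℝ) : Set (Euc d → ℂ) :=
  {f | Adm d p f ∧ Hfun d p f < Bfun d p f}

/-- `PW₊ = { f ∈ PW : 𝒦(f) > 0 }`. -/
def PWplus (d : ℕ) (p : ℝ) : Set (Euc d → ℂ) :=
  {f | f ∈ PWset d p ∧ 0 < Kfun d p f}

/-- `PW₋ = { f ∈ PW : 𝒦(f) < 0 }`. -/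
def PWminus (d : ℕ) (p : ℝ) : Set (Euc d → ℂ) :=
  {f | f ∈ PWset d p ∧ Kfun d p f < 0}

/-! On `𝒦(f) = 0` the Pohozaev-type identity turns `ℋ(f)` into `((d(p−1)−4)/(d(p−1)))‖∇f‖²`.
Such an `f` competes in the infimum `N₂`, so `N₂ ≤ ‖f‖₂^{p+1−d(p−1)/2} ‖∇f‖₂^{d(p−1)/2−2}`;
raising this to the power `4/(d(p−1)−4)` gives exactly `ℬ(f) ≤ ℋ(f)`, hence `f ∉ PW`. -/

theorem l2norm_pos {d : ℕ} {f : Euc d → ℂ} (hf : MemLp f 2 volume) (hf0 : ¬ f =ᵐ[volume] 0) :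
    0 < l2norm d f := by
  have hint : Integrable (fun x => ‖f x‖ ^ (2 : ℝ)) volume := by
    simpa using hf.integrable_norm_rpow (by norm_num) (by norm_num)
  refine Real.sqrt_pos.mpr <| (integral_nonneg fun x => by positivity).lt_of_ne fun h => hf0 ?_
  filter_upwards [(integral_eq_zero_iff_of_nonneg (fun x => by positivity) hint).mp h.symm]
    with x hx
  simpa using hx

theorem gradSq_nonneg (d : ℕ) (f : Euc d → ℂ) : 0 ≤ gradSq d f :=
  integral_nonneg fun _ => sq_nonneg _

theorem N2fun_nonneg (d : ℕ) (p : ℝ) (f : Euc d → ℂ) : 0 ≤ N2fun d p f :=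
  mul_nonneg (Real.rpow_nonneg (Real.sqrt_nonneg _) _) (Real.rpow_nonneg (Real.sqrt_nonneg _) _)

theorem N2val_nonneg (d : ℕ) (p : ℝ) : 0 ≤ N2val d p :=
  Real.sInf_nonneg <| by rintro r ⟨g, -, -, rfl⟩; exact N2fun_nonneg d p g

theorem N2val_le_N2fun {d : ℕ} {p : ℝ} {f : Euc d → ℂ} (hf : Adm d p f) (hK : Kfun d p f ≤ 0) :
    N2val d p ≤ N2fun d p f :=
  csInf_le ⟨0, by rintro r ⟨g, -, -, rfl⟩; exact N2fun_nonneg d p g⟩ ⟨f, hf, hK, rfl⟩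

theorem Hfun_eq_of_Kfun_eq_zero {d : ℕ} {p : ℝ} {f : Euc d → ℂ} (hp : p + 1 ≠ 0)
    (hdp : (d : ℝ) * (p - 1) ≠ 0) (hK : Kfun d p f = 0) :
    Hfun d p f = ((d : ℝ) * (p - 1) - 4) / ((d : ℝ) * (p - 1)) * gradSq d f := by
  have hppow : ppow d (p + 1) f = 2 * (p + 1) * gradSq d f / ((d : ℝ) * (p - 1)) := by
    rw [eq_div_iff hdp]
    unfold Kfun at hK
    field_simp at hK
    linarith
  unfold Hfun
  rw [hppow]
  generalize (d : ℝ) * (p - 1) = a at hdp ⊢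
  field_simp
  ring

theorem Bfun_le_of_Kfun_nonpos {d : ℕ} {p : ℝ} {f : Euc d → ℂ} (hdp : 4 < (d : ℝ) * (p - 1))
    (hf : Adm d p f) (hK : Kfun d p f ≤ 0) :
    Bfun d p f ≤ ((d : ℝ) * (p - 1) - 4) / ((d : ℝ) * (p - 1)) * gradSq d f := by
  set a : ℝ := (d : ℝ) * (p - 1)
  set L : ℝ := l2norm d f ^ (p + 1 - a / 2)
  set s : ℝ := Real.sqrt (gradSq d f)
  have hL : 0 < L := Real.rpow_pos_of_pos (l2norm_pos hf.1.1 hf.2.2) _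
  have hN : N2val d p / L ≤ s ^ (a / 2 - 2) := by
    rw [div_le_iff₀ hL]
    calc N2val d p ≤ N2fun d p f := N2val_le_N2fun hf hK
      _ = s ^ (a / 2 - 2) * L := mul_comm _ _
  have hs : (s ^ (a / 2 - 2)) ^ (4 / (a - 4)) = gradSq d f := by
    have hexp : (a / 2 - 2) * (4 / (a - 4)) = 2 := by
      field_simp [(sub_pos.mpr hdp).ne']
      ring
    rw [← Real.rpow_mul (Real.sqrt_nonneg _), hexp, Real.rpow_two,
      Real.sq_sqrt (gradSq_nonneg d f)]
  calc Bfun d p f = (a - 4) / a * (N2val d p / L) ^ (4 / (a - 4)) := rfl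
    _ ≤ (a - 4) / a * (s ^ (a / 2 - 2)) ^ (4 / (a - 4)) := by
      have : 0 < a - 4 := sub_pos.mpr hdp
      gcongr
      exact div_nonneg (N2val_nonneg d p) hL.le
    _ = (a - 4) / a * gradSq d f := by rw [hs]

theorem notMem_PWset_of_Kfun_eq_zero {d : ℕ} {p : ℝ} {f : Euc d → ℂ}
    (hdp : 4 < (d : ℝ) * (p - 1)) (hf : Adm d p f) (hK : Kfun d p f = 0) : f ∉ PWset d p := by
  have hp : p + 1 ≠ 0 := by
    have : 0 < p - 1 := pos_of_mul_pos_right (by linarith) (Nat.cast_nonneg d)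
    linarith
  rintro ⟨-, hlt⟩
  rw [Hfun_eq_of_Kfun_eq_zero hp (by positivity) hK] at hlt
  exact hlt.not_ge (Bfun_le_of_Kfun_nonpos hdp hf hK.le)

theorem PWplus_union_PWminus {d : ℕ} {p : ℝ}
    (hK : ∀ f ∈ PWset d p, Kfun d p f ≠ 0) : PWset d p = PWplus d p ∪ PWminus d p := by
  ext f
  refine ⟨fun hf => ?_, by rintro (⟨hf, -⟩ | ⟨hf, -⟩) <;> exact hf⟩
  rcases (hK f hf).lt_or_gt with hneg | hpos
  · exact Or.inr ⟨hf, hneg⟩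
  · exact Or.inl ⟨hf, hpos⟩

theorem PWplus_inter_PWminus (d : ℕ) (p : ℝ) : PWplus d p ∩ PWminus d p = ∅ :=
  Set.eq_empty_iff_forall_notMem.mpr fun _ ⟨⟨_, hpos⟩, ⟨_, hneg⟩⟩ => hpos.not_gt hneg

theorem K_zero_not_mem_PW_general (d : ℕ) (p : ℝ) (hd : 1 ≤ d)
    (hp1 : 2 + 4 / (d : ℝ) < p + 1) :
    (∀ f : Euc d → ℂ, Adm d p f → Kfun d p f = 0 → f ∉ PWset d p) ∧
    PWset d p = PWplus d p ∪ PWminus d p ∧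
    PWplus d p ∩ PWminus d p = ∅ := by
  have hdp : 4 < (d : ℝ) * (p - 1) := by
    have hd0 : (0 : ℝ) < d := by exact_mod_cast hd
    rw [← div_lt_iff₀' hd0]
    linarith
  exact ⟨fun _ => notMem_PWset_of_Kfun_eq_zero hdp,
    PWplus_union_PWminus fun _ hf hK => notMem_PWset_of_Kfun_eq_zero hdp hf.1 hK hf,
    PWplus_inter_PWminus d p⟩

/-- a nonzero `H¹` function with `𝒦(f) = 0` does not belong to the potential
well `PW`; consequently `PW = PW₊ ∪ PW₋` and `PW₊ ∩ PW₋ = ∅`. -/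
theorem K_zero_not_mem_PW (d : ℕ) (p : ℝ) (hd : 1 ≤ d)
    (hp1 : 2 + 4 / (d : ℝ) < p + 1)
    (hp2 : 3 ≤ d → p + 1 < 2 * (d : ℝ) / ((d : ℝ) - 2)) :
    (∀ f : Euc d → ℂ, Adm d p f → Kfun d p f = 0 → f ∉ PWset d p) ∧
    PWset d p = PWplus d p ∪ PWminus d p ∧
    PWplus d p ∩ PWminus d p = ∅ :=
  K_zero_not_mem_PW_general d p hd hp1
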